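/- The space [P_n(ℝ²)]² of vector-valued polynomials of degree at most n in two variables decomposes as a direct sum [P_n]² = ∇(P_{n+1}) ⊕ x^⊥·P_{n-1}, where x^⊥ = (x₂, -x₁). -/

import Mathlib

/-!
Let `E = x · ∇` be the Euler operator, which multiplies each homogeneous component of degree `k`
by `k`. The polynomial `x · v = x₁ v₁ + x₂ v₂` has no constant term, so dividing its homogeneous
components by their degrees gives `q` of degree at most `n + 1` with `E q = x · v`. Then
`x · (v - ∇q) = 0`, and since `x₁` is prime and does not divide `x₂`, `v - ∇q = x^⊥ r`; comparing
degrees gives `deg r ≤ n - 1`. For uniqueness, `∇q = x^⊥ s` forces `E q = x · x^⊥ s = 0`, so `q`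
is constant in characteristic zero; hence `∇q = 0` and then `s = 0`.
-/

open MvPolynomial

noncomputable section

abbrev Poly2 := MvPolynomial (Fin 2) ℝ

/-- `p ∈ P_m(ℝ²)` (total degree at most `m`, with `P_m = {0}` for `m < 0`). -/
def degLE (m : ℤ) (p : Poly2) : Prop := p = 0 ∨ (p.totalDegree : ℤ) ≤ m

/-- Two-dimensional gradient of a scalar polynomial. -/
def pgrad2 (q : Poly2) : Fin 2 → Poly2 := fun i => pderiv i q

/-- The vector field `x^⊥ · q = (x₂ q, -x₁ q)` for a scalar polynomial `q`. -/
def xperp (q : Poly2) : Fin 2 → Poly2 := ![X 1 * q, -(X 0 * q)]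

namespace MvPolynomial

section Euler

variable {σ R : Type*} [Fintype σ] [CommSemiring R]

def eulerOp : MvPolynomial σ R →ₗ[R] MvPolynomial σ R :=
  ∑ i, LinearMap.mulLeft R (X i) ∘ₗ (pderiv i).toLinearMap

lemma eulerOp_apply (φ : MvPolynomial σ R) : eulerOp φ = ∑ i, X i * pderiv i φ := by
  simp [eulerOp]

lemma eulerOp_monomial (m : σ →₀ ℕ) (r : R) :
    eulerOp (monomial m r) = m.degree • monomial m r := by
  simp only [eulerOp_apply, X_mul_pderiv_monomial, ← Finset.sum_smul, Finsupp.degree_eq_sum]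

lemma coeff_eulerOp (m : σ →₀ ℕ) (φ : MvPolynomial σ R) :
    coeff m (eulerOp φ) = m.degree • coeff m φ := by
  induction φ using MvPolynomial.induction_on' with
  | monomial n r =>
    classical
    rw [eulerOp_monomial, coeff_smul, coeff_monomial]
    split_ifs with h
    · rw [h]
    · rw [smul_zero, smul_zero]
  | add p q hp hq => rw [map_add, coeff_add, hp, hq, coeff_add, smul_add]

lemma IsHomogeneous.eulerOp_eq {φ : MvPolynomial σ R} {n : ℕ} (h : φ.IsHomogeneous n) :
    eulerOp φ = n • φ := by
  rw [eulerOp_apply, h.sum_X_mul_pderiv]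

end Euler

lemma totalDegree_pderiv_le {σ R : Type*} [CommSemiring R] (i : σ) (φ : MvPolynomial σ R) :
    (pderiv i φ).totalDegree ≤ φ.totalDegree - 1 := by
  conv_lhs => rw [← sum_homogeneousComponent φ, map_sum]
  refine (totalDegree_finsetSum _ _).trans (Finset.sup_le fun k hk => ?_)
  have hk := Finset.mem_range.1 hk
  have := ((homogeneousComponent_isHomogeneous k φ).pderiv (i := i)).totalDegree_le
  omega

section CharZero

variable {σ K : Type*} [Fintype σ] [Field K] [CharZero K]

lemma eq_C_of_eulerOp_eq_zero {φ : MvPolynomial σ K} (h : eulerOp φ = 0) :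
    φ = C (coeff 0 φ) := by
  classical
  ext m
  rw [coeff_C]
  split_ifs with hm
  · rw [hm]
  · have hcoeff := coeff_eulerOp m φ
    rw [h, coeff_zero, eq_comm, smul_eq_zero] at hcoeff
    exact hcoeff.resolve_left ((Finsupp.degree_eq_zero_iff m).not.2 (Ne.symm hm))

lemma pderiv_eq_zero_of_eulerOp_eq_zero {φ : MvPolynomial σ K} (h : eulerOp φ = 0) (i : σ) :
    pderiv i φ = 0 := by
  rw [eq_C_of_eulerOp_eq_zero h, pderiv_C]

lemma exists_eulerOp_eq {φ : MvPolynomial σ K} (h : constantCoeff φ = 0) :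
    ∃ ψ, eulerOp ψ = φ ∧ ψ.totalDegree ≤ φ.totalDegree := by
  refine ⟨∑ k ∈ Finset.range (φ.totalDegree + 1), (k : K)⁻¹ • homogeneousComponent k φ, ?_, ?_⟩
  · conv_rhs => rw [← sum_homogeneousComponent φ]
    rw [map_sum]
    refine Finset.sum_congr rfl fun k _ => ?_
    rw [map_smul, (homogeneousComponent_isHomogeneous k φ).eulerOp_eq]
    rcases eq_or_ne k 0 with rfl | hk
    · rw [zero_smul, smul_zero, homogeneousComponent_zero, ← constantCoeff_eq, h, C_0]
    · rw [← Nat.cast_smul_eq_nsmul K, smul_smul, inv_mul_cancel₀ (Nat.cast_ne_zero.2 hk), one_smul]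
  · refine (totalDegree_finsetSum _ _).trans (Finset.sup_le fun k hk => ?_)
    refine (totalDegree_smul_le _ _).trans ?_
    exact (homogeneousComponent_isHomogeneous k φ).totalDegree_le.trans
      (Nat.lt_succ_iff.1 (Finset.mem_range.1 hk))

end CharZero

variable {σ R : Type*} [CommRing R] [IsDomain R]

lemma exists_eq_X_mul_of_X_mul_add_X_mul_eq_zero {i j : σ} (hij : i ≠ j)
    {a b : MvPolynomial σ R} (h : X i * a + X j * b = 0) :
    ∃ r, a = X j * r ∧ b = -(X i * r) := by
  have hdvd : X i ∣ X j * b := ⟨-a, by linear_combination h⟩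
  obtain ⟨s, rfl⟩ := (X_prime.dvd_or_dvd hdvd).resolve_left (X_dvd_X.not.2 hij)
  have hs : X i * (a + X j * s) = 0 := by linear_combination h
  refine ⟨-s, ?_, by ring⟩
  linear_combination (mul_eq_zero.1 hs).resolve_left (X_ne_zero i)

lemma totalDegree_X_mul {r : MvPolynomial σ R} (hr : r ≠ 0) (i : σ) :
    (X i * r).totalDegree = r.totalDegree + 1 := by
  rw [totalDegree_mul_of_isDomain (X_ne_zero i) hr, totalDegree_X, add_comm]

end MvPolynomial

lemma degLE_natCast_iff {m : ℕ} {p : Poly2} : degLE m p ↔ p.totalDegree ≤ m := by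
  refine ⟨?_, fun h => Or.inr (by exact_mod_cast h)⟩
  rintro (rfl | h)
  · simp
  · exact_mod_cast h

lemma degLE_sub_one_of_totalDegree_X_mul_le {m : ℕ} {r : Poly2} (i : Fin 2)
    (h : (X i * r).totalDegree ≤ m) : degLE (m - 1) r := by
  rcases eq_or_ne r 0 with rfl | hr
  · exact Or.inl rfl
  · rw [totalDegree_X_mul hr] at h
    exact Or.inr (by omega)

lemma pgrad2_sub (q q' : Poly2) : pgrad2 (q - q') = pgrad2 q - pgrad2 q' :=
  funext fun i => map_sub (pderiv i) q q'

lemma xperp_sub (r r' : Poly2) : xperp (r - r') = xperp r - xperp r' := by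
  funext i
  fin_cases i
  · exact mul_sub (X 1) r r'
  · show -(X 0 * (r - r')) = -(X 0 * r) - -(X 0 * r')
    ring

lemma exists_eq_pgrad2_add_xperp {n : ℕ} {v : Fin 2 → Poly2}
    (hv : ∀ i, (v i).totalDegree ≤ n) :
    ∃ q r, degLE (n + 1) q ∧ degLE (n - 1) r ∧ v = pgrad2 q + xperp r := by
  have hp : (X 0 * v 0 + X 1 * v 1).totalDegree ≤ n + 1 := by
    refine (totalDegree_add _ _).trans (max_le ?_ ?_) <;>
      refine (totalDegree_mul _ _).trans ?_ <;> rw [totalDegree_X] <;> linarith [hv 0, hv 1]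
  obtain ⟨q, hq, hq_deg⟩ := exists_eulerOp_eq (φ := X 0 * v 0 + X 1 * v 1) (by simp)
  rw [eulerOp_apply, Fin.sum_univ_two] at hq
  have hx : X 0 * (v 0 - pderiv 0 q) + X 1 * (v 1 - pderiv 1 q) = 0 := by
    linear_combination -hq
  obtain ⟨r, hr0, hr1⟩ := exists_eq_X_mul_of_X_mul_add_X_mul_eq_zero (by decide) hx
  refine ⟨q, r, degLE_natCast_iff.2 (by exact_mod_cast hq_deg.trans hp),
    degLE_sub_one_of_totalDegree_X_mul_le 1 ?_, ?_⟩
  · rw [← hr0]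
    refine (totalDegree_sub _ _).trans (max_le (hv 0) ?_)
    have := totalDegree_pderiv_le 0 q
    omega
  · funext i
    fin_cases i
    · show v 0 = pderiv 0 q + X 1 * r
      linear_combination hr0
    · show v 1 = pderiv 1 q + -(X 0 * r)
      linear_combination hr1

lemma eq_zero_of_pgrad2_eq_xperp {q s : Poly2} (h : pgrad2 q = xperp s) :
    pgrad2 q = 0 ∧ s = 0 := by
  have h0 : pderiv 0 q = X 1 * s := congrFun h 0
  have h1 : pderiv 1 q = -(X 0 * s) := congrFun h 1
  have hEuler : eulerOp q = 0 := by
    rw [eulerOp_apply, Fin.sum_univ_two, h0, h1]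
    ring
  have hgrad : pgrad2 q = 0 := funext (pderiv_eq_zero_of_eulerOp_eq_zero hEuler)
  refine ⟨hgrad, ?_⟩
  have : X 1 * s = 0 := h0.symm.trans (congrFun hgrad 0)
  exact (mul_eq_zero.1 this).resolve_left (X_ne_zero 1)

lemma pgrad2_eq_and_eq_of_pgrad2_add_xperp_eq {q q' r r' : Poly2}
    (h : pgrad2 q + xperp r = pgrad2 q' + xperp r') : pgrad2 q = pgrad2 q' ∧ r = r' := by
  have hdiff : pgrad2 (q - q') = xperp (r' - r) := by
    rw [pgrad2_sub, xperp_sub]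
    linear_combination h
  obtain ⟨hgrad, hr⟩ := eq_zero_of_pgrad2_eq_xperp hdiff
  rw [pgrad2_sub, sub_eq_zero] at hgrad
  exact ⟨hgrad, (sub_eq_zero.1 hr).symm⟩

/-- `[P_n(ℝ²)]² = ∇(P_{n+1}) ⊕ x^⊥ · P_{n-1}`: every vector polynomial of degree at
most `n` decomposes uniquely as a sum of a gradient of a polynomial of degree at most
`n+1` and `x^⊥` times a scalar polynomial of degree at most `n-1`. -/
theorem poly_decomposition_2d_grad_perp (n : ℕ) (v : Fin 2 → Poly2)
    (hv : ∀ i, degLE (n : ℤ) (v i)) :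
    ∃! gc : (Fin 2 → Poly2) × (Fin 2 → Poly2),
      (∃ q : Poly2, degLE ((n : ℤ) + 1) q ∧ gc.1 = pgrad2 q) ∧
      (∃ q : Poly2, degLE ((n : ℤ) - 1) q ∧ gc.2 = xperp q) ∧
      v = gc.1 + gc.2 := by
  obtain ⟨q, r, hq, hr, hv_eq⟩ := exists_eq_pgrad2_add_xperp fun i => degLE_natCast_iff.1 (hv i)
  refine ⟨(pgrad2 q, xperp r), ⟨⟨q, hq, rfl⟩, ⟨r, hr, rfl⟩, hv_eq⟩, ?_⟩
  rintro ⟨g, c⟩ ⟨⟨q', -, rfl⟩, ⟨r', -, rfl⟩, hv'⟩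
  obtain ⟨hgrad, rfl⟩ := pgrad2_eq_and_eq_of_pgrad2_add_xperp_eq (hv'.symm.trans hv_eq)
  rw [hgrad]
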